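/- arXiv:2402.08248 — 5 statements merged into one kernel-verified Lean document; each statement's English description precedes it below -/
import Mathlib

section
/- Let P_n be the path graph on n ≥ 3 vertices. Then RL1(P_n) = 12n − 22, RL2(P_n) = 4n − 6, RL3(P_n) = 4n − 6, and RL4(P_n) = 4. -/
/-! Every edge of `Pₙ` joins two consecutive vertices, the two end vertices have degree 1 and the
others degree 2. So for `n ≥ 3` there are two pendant edges with degree pair `(1, 2)` and `n - 3`
internal edges with degree pair `(2, 2)`, and any index `Σ_{uv} g(d(u), d(v))` with `g` symmetric
equals `2 g(1, 2) + (n - 3) g(2, 2)`. -/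

open Finset SimpleGraph

variable {V : Type*}

/-- The degree of a vertex, as a real number. -/
noncomputable def deg [Fintype V] (G : SimpleGraph V) (v : V) : ℝ :=
  haveI := Classical.decEq V
  haveI : DecidableRel G.Adj := Classical.decRel _
  (G.degree v : ℝ)

/-- Sum of a symmetric function of the two endpoints, over the edges of `G`
(each edge counted once). -/
noncomputable def edgeSum [Fintype V] (G : SimpleGraph V)
    (f : V → V → ℝ) (hf : ∀ u v, f u v = f v u) : ℝ :=
  haveI := Classical.decEq V
  haveI : DecidableRel G.Adj := Classical.decRel _
  ∑ e ∈ G.edgeFinset, Sym2.lift ⟨f, hf⟩ e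

/-- The first Rehan–Lanel index: `RL₁(G) = Σ_{uv∈E(G)} (d(u)² + d(v)² + d(u)d(v))`. -/
noncomputable def RL1 [Fintype V] (G : SimpleGraph V) : ℝ :=
  edgeSum G (fun u v => deg G u ^ 2 + deg G v ^ 2 + deg G u * deg G v)
    (fun u v => by ring)

/-- The second Rehan–Lanel index: `RL₂(G) = Σ_{uv∈E(G)} (d(u)² + d(v)² − d(u)d(v))`. -/
noncomputable def RL2 [Fintype V] (G : SimpleGraph V) : ℝ :=
  edgeSum G (fun u v => deg G u ^ 2 + deg G v ^ 2 - deg G u * deg G v)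
    (fun u v => by ring)

/-- The third Rehan–Lanel index: `RL₃(G) = Σ_{uv∈E(G)} (|d(u) − d(v)| + d(u)d(v))`. -/
noncomputable def RL3 [Fintype V] (G : SimpleGraph V) : ℝ :=
  edgeSum G (fun u v => |deg G u - deg G v| + deg G u * deg G v)
    (fun u v => by rw [abs_sub_comm]; ring)

/-- The fourth Rehan–Lanel index: `RL₄(G) = Σ_{uv∈E(G)} |d(u) − d(v)|·d(u)d(v)`. -/
noncomputable def RL4 [Fintype V] (G : SimpleGraph V) : ℝ :=
  edgeSum G (fun u v => |deg G u - deg G v| * (deg G u * deg G v))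
    (fun u v => by rw [abs_sub_comm]; ring)

theorem Fin.card_filter_val_eq (n k : ℕ) :
    #{u : Fin n | u.val = k} = if k < n then 1 else 0 := by
  split_ifs with hk
  · exact card_eq_one.mpr ⟨⟨k, hk⟩, by ext u; simp [Fin.ext_iff]⟩
  · exact card_eq_zero.mpr (filter_eq_empty_iff.mpr fun u _ => by omega)

namespace SimpleGraph

theorem degree_pathGraph {n : ℕ} [DecidableRel (pathGraph n).Adj] (v : Fin n) :
    (pathGraph n).degree v = (if v.val + 1 < n then 1 else 0) + (if 0 < v.val then 1 else 0) := by
  rw [← card_neighborFinset_eq_degree, neighborFinset_eq_filter]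
  simp only [pathGraph_adj]
  rw [filter_or, card_union_of_disjoint (disjoint_filter.mpr fun u _ h => by omega)]
  have hpred : #{u : Fin n | u.val + 1 = v.val} = if 0 < v.val then 1 else 0 := by
    split_ifs with hv
    · rw [filter_congr (q := fun u : Fin n => u.val = v.val - 1) fun u _ => by omega,
        Fin.card_filter_val_eq, if_pos (by omega)]
    · exact card_eq_zero.mpr (filter_eq_empty_iff.mpr fun u _ => by omega)
  rw [hpred, filter_congr (q := fun u : Fin n => u.val = v.val + 1) fun u _ => by omega,
    Fin.card_filter_val_eq]

theorem deg_pathGraph {n : ℕ} (v : Fin n) :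
    deg (pathGraph n) v = (if v.val + 1 < n then 1 else 0) + (if 0 < v.val then 1 else 0) := by
  classical
  rw [deg, degree_pathGraph]
  push_cast
  rfl

theorem sum_edgeFinset_pathGraph {M : Type*} [AddCommMonoid M] {n : ℕ}
    [Fintype (pathGraph (n + 1)).edgeSet] (f : Sym2 (Fin (n + 1)) → M) :
    ∑ e ∈ (pathGraph (n + 1)).edgeFinset, f e = ∑ i : Fin n, f s(i.castSucc, i.succ) := by
  refine (sum_bij (fun i _ => s(i.castSucc, i.succ)) ?_ ?_ ?_ fun _ _ => rfl).symm
  · intro i _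
    simp [pathGraph_adj]
  · intro i _ j _ h
    rcases Sym2.eq_iff.mp h with ⟨h, -⟩ | ⟨h, h'⟩
    · exact Fin.castSucc_injective _ h
    · simp only [Fin.ext_iff, Fin.val_castSucc, Fin.val_succ] at h h'
      omega
  · intro e he
    induction e with
    | h u v =>
      rw [mem_edgeFinset, mem_edgeSet, pathGraph_adj] at he
      rcases he with huv | hvu
      · refine ⟨⟨u.val, by omega⟩, mem_univ _, ?_⟩
        congr 1; ext; simp [huv]
      · refine ⟨⟨v.val, by omega⟩, mem_univ _, ?_⟩
        rw [Sym2.eq_swap]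
        congr 1; ext; simp [hvu]

theorem edgeSum_pathGraph {n : ℕ} (f : Fin (n + 1) → Fin (n + 1) → ℝ)
    (hf : ∀ u v, f u v = f v u) :
    edgeSum (pathGraph (n + 1)) f hf = ∑ i : Fin n, f i.castSucc i.succ := by
  classical
  exact sum_edgeFinset_pathGraph _

theorem edgeSum_pathGraph_deg (m : ℕ) (g : ℝ → ℝ → ℝ) (hg : ∀ a b, g a b = g b a) :
    edgeSum (pathGraph (m + 3)) (fun u v => g (deg (pathGraph (m + 3)) u)
      (deg (pathGraph (m + 3)) v)) (fun _ _ => hg _ _) = 2 * g 1 2 + m * g 2 2 := by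
  rw [edgeSum_pathGraph, Fin.sum_univ_succ, Fin.sum_univ_castSucc]
  norm_num [deg_pathGraph, hg 2 1]
  ring

end SimpleGraph

/-- For the path graph `Pₙ` on `n ≥ 3` vertices:
`RL₁ = 12n − 22`, `RL₂ = 4n − 6`, `RL₃ = 4n − 6`, `RL₄ = 4`. -/
theorem RL_pathGraph (n : ℕ) (hn : 3 ≤ n) :
    RL1 (SimpleGraph.pathGraph n) = 12 * n - 22 ∧
      RL2 (SimpleGraph.pathGraph n) = 4 * n - 6 ∧
      RL3 (SimpleGraph.pathGraph n) = 4 * n - 6 ∧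
      RL4 (SimpleGraph.pathGraph n) = 4 := by
  obtain ⟨m, rfl⟩ : ∃ m, n = m + 3 := ⟨n - 3, by omega⟩
  refine ⟨?_, ?_, ?_, ?_⟩
  · refine (edgeSum_pathGraph_deg m (fun a b => a ^ 2 + b ^ 2 + a * b) fun _ _ => by ring).trans ?_
    push_cast; ring
  · refine (edgeSum_pathGraph_deg m (fun a b => a ^ 2 + b ^ 2 - a * b) fun _ _ => by ring).trans ?_
    push_cast; ring
  · refine (edgeSum_pathGraph_deg m (fun a b => |a - b| + a * b)
      fun _ _ => by rw [abs_sub_comm]; ring).trans ?_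
    norm_num; ring
  · refine (edgeSum_pathGraph_deg m (fun a b => |a - b| * (a * b))
      fun _ _ => by rw [abs_sub_comm]; ring).trans ?_
    norm_num
end

section
/- Let G be an r-regular simple graph on n vertices with 2 ≤ r < n. Then BRL1(G) = 6nr(r−1)^2/(n−r)^2, BRL2(G) = 2nr(r−1)^2/(n−r)^2, BRL3(G) = 2nr(r−1)^2/(n−r)^2, and BRL4(G) = 0. -/
open Finset SimpleGraph

variable {V : Type*}

/-- The Banhatti degree of the endpoint `u` of an edge `uv`:
`B(u) = (d(u) + d(v) − 2)/(n − d(u))` where `n` is the number of vertices. -/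
noncomputable def bdeg [Fintype V] (G : SimpleGraph V) (u v : V) : ℝ :=
  (deg G u + deg G v - 2) / ((Fintype.card V : ℝ) - deg G u)

/-- The first Banhatti Rehan–Lanel index:
`BRL₁(G) = Σ_{uv∈E(G)} (B(u)² + B(v)² + B(u)B(v))`. -/
noncomputable def BRL1 [Fintype V] (G : SimpleGraph V) : ℝ :=
  edgeSum G (fun u v => bdeg G u v ^ 2 + bdeg G v u ^ 2 + bdeg G u v * bdeg G v u)
    (fun u v => by ring)

/-- The second Banhatti Rehan–Lanel index:
`BRL₂(G) = Σ_{uv∈E(G)} (B(u)² + B(v)² − B(u)B(v))`. -/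
noncomputable def BRL2 [Fintype V] (G : SimpleGraph V) : ℝ :=
  edgeSum G (fun u v => bdeg G u v ^ 2 + bdeg G v u ^ 2 - bdeg G u v * bdeg G v u)
    (fun u v => by ring)

/-- The third Banhatti Rehan–Lanel index:
`BRL₃(G) = Σ_{uv∈E(G)} (|B(u) − B(v)| + B(u)B(v))`. -/
noncomputable def BRL3 [Fintype V] (G : SimpleGraph V) : ℝ :=
  edgeSum G (fun u v => |bdeg G u v - bdeg G v u| + bdeg G u v * bdeg G v u)
    (fun u v => by rw [abs_sub_comm]; ring)

/-- The fourth Banhatti Rehan–Lanel index: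
`BRL₄(G) = Σ_{uv∈E(G)} |B(u) − B(v)|·B(u)B(v)`. -/
noncomputable def BRL4 [Fintype V] (G : SimpleGraph V) : ℝ :=
  edgeSum G (fun u v => |bdeg G u v - bdeg G v u| * (bdeg G u v * bdeg G v u))
    (fun u v => by rw [abs_sub_comm]; ring)

/-! In an `r`-regular graph every Banhatti degree equals `B = 2(r - 1)/(n - r)`, so each index is
the number `nr/2` of edges times a polynomial in `B`, and `|B(u) - B(v)|` vanishes on every edge. -/

lemma sum_deg_eq_two_mul_ncard_edgeSet [Fintype V] (G : SimpleGraph V) :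
    ∑ v, deg G v = 2 * G.edgeSet.ncard := by
  classical
  have handshake := congrArg (Nat.cast : ℕ → ℝ) (G.sum_degrees_eq_twice_card_edges)
  push_cast at handshake
  rw [← coe_edgeFinset, Set.ncard_coe_finset, ← handshake]
  unfold deg
  congr!

lemma edgeSum_eq_ncard_mul [Fintype V] (G : SimpleGraph V) (f : V → V → ℝ)
    (hf : ∀ u v, f u v = f v u) (c : ℝ) (h : ∀ u v, G.Adj u v → f u v = c) :
    edgeSum G f hf = G.edgeSet.ncard * c := by
  classical
  have hconst : ∀ e ∈ G.edgeFinset, Sym2.lift ⟨f, hf⟩ e = c := by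
    intro e he
    induction e using Sym2.ind with
    | _ u v => exact h u v (by simpa using he)
  unfold edgeSum
  rw [← coe_edgeFinset, Set.ncard_coe_finset, ← nsmul_eq_mul, ← Finset.sum_const]
  convert Finset.sum_congr rfl hconst

lemma ncard_edgeSet_of_regular [Fintype V] (G : SimpleGraph V) (r : ℝ)
    (hreg : ∀ v, deg G v = r) :
    (G.edgeSet.ncard : ℝ) = Fintype.card V * r / 2 := by
  have handshake := sum_deg_eq_two_mul_ncard_edgeSet G
  simp only [hreg, Finset.sum_const, Finset.card_univ, nsmul_eq_mul] at handshake
  linarith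

lemma bdeg_of_regular [Fintype V] (G : SimpleGraph V) (r : ℝ) (hreg : ∀ v, deg G v = r)
    (u v : V) : bdeg G u v = 2 * (r - 1) / (Fintype.card V - r) := by
  rw [bdeg, hreg, hreg]
  ring

theorem BRL_of_regular_general {V : Type*} [Fintype V] (G : SimpleGraph V) (n r : ℕ)
    (hn : Fintype.card V = n)
    (hreg : ∀ v : V, deg G v = r) :
    BRL1 G = 6 * n * r * ((r : ℝ) - 1) ^ 2 / ((n : ℝ) - r) ^ 2 ∧
      BRL2 G = 2 * n * r * ((r : ℝ) - 1) ^ 2 / ((n : ℝ) - r) ^ 2 ∧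
      BRL3 G = 2 * n * r * ((r : ℝ) - 1) ^ 2 / ((n : ℝ) - r) ^ 2 ∧
      BRL4 G = 0 := by
  set B : ℝ := 2 * (r - 1) / (n - r) with hB_def
  have hB : ∀ u v, bdeg G u v = B := by
    simpa only [hn] using bdeg_of_regular G r hreg
  have hedges : (G.edgeSet.ncard : ℝ) = n * r / 2 := by
    simpa only [hn] using ncard_edgeSet_of_regular G r hreg
  have hB_sq : B ^ 2 = 4 * ((r : ℝ) - 1) ^ 2 / ((n : ℝ) - r) ^ 2 := by
    rw [hB_def, div_pow]
    ring
  refine ⟨?_, ?_, ?_, ?_⟩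
  · rw [BRL1, edgeSum_eq_ncard_mul G _ _ (3 * B ^ 2) fun u v _ => by rw [hB, hB]; ring,
      hedges, hB_sq]
    ring
  · rw [BRL2, edgeSum_eq_ncard_mul G _ _ (B ^ 2) fun u v _ => by rw [hB, hB]; ring,
      hedges, hB_sq]
    ring
  · rw [BRL3, edgeSum_eq_ncard_mul G _ _ (B ^ 2) fun u v _ => by
      rw [hB, hB, sub_self, abs_zero]; ring, hedges, hB_sq]
    ring
  · rw [BRL4, edgeSum_eq_ncard_mul G _ _ 0 fun u v _ => by rw [hB, hB, sub_self, abs_zero]; ring]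
    ring

/-- For an `r`-regular simple graph `G` on `n` vertices with `2 ≤ r < n`:
`BRL₁(G) = 6nr(r−1)²/(n−r)²`, `BRL₂(G) = 2nr(r−1)²/(n−r)²`,
`BRL₃(G) = 2nr(r−1)²/(n−r)²`, and `BRL₄(G) = 0`. -/
theorem BRL_of_regular {V : Type*} [Fintype V] (G : SimpleGraph V) (n r : ℕ)
    (hn : Fintype.card V = n) (hr : 2 ≤ r) (hrn : r < n)
    (hreg : ∀ v : V, deg G v = r) :
    BRL1 G = 6 * n * r * ((r : ℝ) - 1) ^ 2 / ((n : ℝ) - r) ^ 2 ∧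
      BRL2 G = 2 * n * r * ((r : ℝ) - 1) ^ 2 / ((n : ℝ) - r) ^ 2 ∧
      BRL3 G = 2 * n * r * ((r : ℝ) - 1) ^ 2 / ((n : ℝ) - r) ^ 2 ∧
      BRL4 G = 0 :=
  BRL_of_regular_general G n r hn hreg
end

section
/- Let W_n (n ≥ 3) be the wheel graph and let x > 0 be a real number. Then BRL1(W_n, x) = n·x^{48/(n−2)^2} + n·x^{(n+1)^2(n^2−3n+3)/(n−2)^2}, BRL2(W_n, x) = n·x^{16/(n−2)^2} + n·x^{(n+1)^2(n^2−5n+7)/(n−2)^2}, and BRL4(W_n, x) = n + n·x^{(n+1)^3|n−3|/(n−2)^2}. -/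
open Finset SimpleGraph

variable {V : Type*}

/-- The wheel graph `Wₙ`: the join of a single hub vertex (`none`) with the
cycle `Cₙ` (on the vertices `some i`). -/
def wheelGraph (n : ℕ) : SimpleGraph (Option (Fin n)) :=
  SimpleGraph.fromRel (fun u v =>
    u = none ∨ ∃ i j, u = some i ∧ v = some j ∧ (SimpleGraph.cycleGraph n).Adj i j)

/-- The first Banhatti Rehan–Lanel exponential:
`BRL₁(G,x) = Σ_{uv∈E(G)} x^(B(u)² + B(v)² + B(u)B(v))` (real exponentiation). -/
noncomputable def BRL1exp [Fintype V] (G : SimpleGraph V) (x : ℝ) : ℝ :=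
  edgeSum G (fun u v =>
      x ^ (bdeg G u v ^ 2 + bdeg G v u ^ 2 + bdeg G u v * bdeg G v u))
    (fun u v => by congr 1; ring)

/-- The second Banhatti Rehan–Lanel exponential:
`BRL₂(G,x) = Σ_{uv∈E(G)} x^(B(u)² + B(v)² − B(u)B(v))` (real exponentiation). -/
noncomputable def BRL2exp [Fintype V] (G : SimpleGraph V) (x : ℝ) : ℝ :=
  edgeSum G (fun u v =>
      x ^ (bdeg G u v ^ 2 + bdeg G v u ^ 2 - bdeg G u v * bdeg G v u))
    (fun u v => by congr 1; ring)

/-- The fourth Banhatti Rehan–Lanel exponential: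
`BRL₄(G,x) = Σ_{uv∈E(G)} x^(|B(u) − B(v)|·B(u)B(v))` (real exponentiation). -/
noncomputable def BRL4exp [Fintype V] (G : SimpleGraph V) (x : ℝ) : ℝ :=
  edgeSum G (fun u v =>
      x ^ (|bdeg G u v - bdeg G v u| * (bdeg G u v * bdeg G v u)))
    (fun u v => by congr 1; rw [abs_sub_comm]; ring)

/-! In `Wₙ` the hub has degree `n` and every rim vertex degree `3`, so on each of the `n` rim edges
(counted by the handshake lemma on `Cₙ`) the Banhatti degrees are `4/(n-2), 4/(n-2)`, and on each
of the `n` spokes they are `n+1, (n+1)/(n-2)`. Each exponential is therefore `n` times one term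
per kind of edge. -/

theorem card_edgeFinset_cycleGraph {n : ℕ} (hn : 3 ≤ n) : #(cycleGraph n).edgeFinset = n := by
  obtain ⟨m, rfl⟩ : ∃ m, n = m + 3 := ⟨n - 3, by omega⟩
  have := (cycleGraph (m + 3)).sum_degrees_eq_twice_card_edges
  simp only [cycleGraph_degree_three_le, sum_const, card_univ, Fintype.card_fin,
    smul_eq_mul] at this
  omega

namespace wheelGraph

variable {n : ℕ}

@[simp]
theorem adj_none_some (i : Fin n) : (wheelGraph n).Adj none (some i) := by
  simp [wheelGraph]

@[simp]
theorem adj_some_none (i : Fin n) : (wheelGraph n).Adj (some i) none :=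
  (adj_none_some i).symm

@[simp]
theorem adj_some_some {i j : Fin n} :
    (wheelGraph n).Adj (some i) (some j) ↔ (cycleGraph n).Adj i j := by
  simp only [wheelGraph, fromRel_adj, ne_eq, Option.some.injEq, reduceCtorEq, false_or,
    exists_and_left, exists_eq_left']
  exact ⟨fun ⟨_, h⟩ => h.elim id (·.symm), fun h => ⟨h.ne, .inl h⟩⟩

theorem neighborFinset_none [Fintype ((wheelGraph n).neighborSet none)] :
    (wheelGraph n).neighborFinset none = univ.map .some := by
  ext v
  cases v <;> simp

theorem neighborFinset_some (i : Fin n) [Fintype ((wheelGraph n).neighborSet (some i))] :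
    (wheelGraph n).neighborFinset (some i) =
      insert none (((cycleGraph n).neighborFinset i).map .some) := by
  ext v
  cases v <;> simp

theorem degree_none [Fintype ((wheelGraph n).neighborSet none)] :
    (wheelGraph n).degree none = n := by
  rw [← card_neighborFinset_eq_degree, neighborFinset_none, card_map, card_univ,
    Fintype.card_fin]

theorem degree_some (hn : 3 ≤ n) (i : Fin n) [Fintype ((wheelGraph n).neighborSet (some i))] :
    (wheelGraph n).degree (some i) = 3 := by
  obtain ⟨m, rfl⟩ : ∃ m, n = m + 3 := ⟨n - 3, by omega⟩
  rw [← card_neighborFinset_eq_degree, neighborFinset_some, card_insert_of_notMem (by simp),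
    card_map, card_neighborFinset_eq_degree, cycleGraph_degree_three_le]

theorem edgeFinset_eq [Fintype (wheelGraph n).edgeSet] :
    (wheelGraph n).edgeFinset =
      (cycleGraph n).edgeFinset.map Function.Embedding.some.sym2Map ∪
        univ.map (Function.Embedding.some.trans (Sym2.mkEmbedding none)) := by
  ext e
  induction e using Sym2.ind with
  | _ u v => cases u <;> cases v <;> simp [Sym2.exists, and_or_left, exists_or, adj_comm]

theorem edgeSum_eq (hn : 3 ≤ n) {f : Option (Fin n) → Option (Fin n) → ℝ}
    (hf : ∀ u v, f u v = f v u) {a b : ℝ} (hrim : ∀ i j, f (some i) (some j) = a)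
    (hspoke : ∀ i, f none (some i) = b) :
    edgeSum (wheelGraph n) f hf = n * a + n * b := by
  have hdisj : Disjoint ((cycleGraph n).edgeFinset.map Function.Embedding.some.sym2Map)
      (univ.map (Function.Embedding.some.trans (Sym2.mkEmbedding none))) := by
    simp only [Finset.disjoint_left, mem_map, mem_univ, true_and, not_exists]
    rintro _ ⟨e, -, rfl⟩ i
    induction e using Sym2.ind
    simp
  have hrim_edge : ∀ e ∈ (cycleGraph n).edgeFinset,
      Sym2.lift ⟨f, hf⟩ (Function.Embedding.some.sym2Map e) = a := by
    intro e _
    induction e using Sym2.ind with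
    | _ i j => exact hrim i j
  simp only [edgeSum, edgeFinset_eq]
  rw [sum_union hdisj, sum_map, sum_map, sum_eq_card_nsmul hrim_edge,
    card_edgeFinset_cycleGraph hn]
  simp [hspoke]

theorem deg_none : deg (wheelGraph n) none = n := by
  simp only [deg, degree_none]

theorem deg_some (hn : 3 ≤ n) (i : Fin n) : deg (wheelGraph n) (some i) = 3 := by
  simp only [deg, degree_some hn, Nat.cast_ofNat]

theorem bdeg_some_some (hn : 3 ≤ n) (i j : Fin n) :
    bdeg (wheelGraph n) (some i) (some j) = 4 / ((n : ℝ) - 2) := by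
  rw [bdeg, deg_some hn, deg_some hn, Fintype.card_option, Fintype.card_fin]
  push_cast
  ring_nf

theorem bdeg_some_none (hn : 3 ≤ n) (i : Fin n) :
    bdeg (wheelGraph n) (some i) none = ((n : ℝ) + 1) / ((n : ℝ) - 2) := by
  rw [bdeg, deg_some hn, deg_none, Fintype.card_option, Fintype.card_fin]
  push_cast
  ring_nf

theorem bdeg_none_some (hn : 3 ≤ n) (i : Fin n) :
    bdeg (wheelGraph n) none (some i) = (n : ℝ) + 1 := by
  rw [bdeg, deg_some hn, deg_none, Fintype.card_option, Fintype.card_fin]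
  push_cast
  ring_nf

end wheelGraph

section BRLexp

variable {n : ℕ}

theorem sub_two_pos_of_three_le (hn : 3 ≤ n) : (0 : ℝ) < n - 2 := by
  rw [sub_pos]
  exact_mod_cast hn

theorem BRL1exp_wheelGraph (hn : 3 ≤ n) (x : ℝ) :
    BRL1exp (wheelGraph n) x =
      n * x ^ (48 / ((n : ℝ) - 2) ^ 2) +
        n * x ^ (((n : ℝ) + 1) ^ 2 * ((n : ℝ) ^ 2 - 3 * n + 3) / ((n : ℝ) - 2) ^ 2) := by
  have := (sub_two_pos_of_three_le hn).ne'
  refine wheelGraph.edgeSum_eq hn _ (fun i j => ?_) (fun i => ?_)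
  · rw [wheelGraph.bdeg_some_some hn, wheelGraph.bdeg_some_some hn]
    congr 1; field_simp; ring
  · rw [wheelGraph.bdeg_none_some hn, wheelGraph.bdeg_some_none hn]
    congr 1; field_simp; ring

theorem BRL2exp_wheelGraph (hn : 3 ≤ n) (x : ℝ) :
    BRL2exp (wheelGraph n) x =
      n * x ^ (16 / ((n : ℝ) - 2) ^ 2) +
        n * x ^ (((n : ℝ) + 1) ^ 2 * ((n : ℝ) ^ 2 - 5 * n + 7) / ((n : ℝ) - 2) ^ 2) := by
  have := (sub_two_pos_of_three_le hn).ne'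
  refine wheelGraph.edgeSum_eq hn _ (fun i j => ?_) (fun i => ?_)
  · rw [wheelGraph.bdeg_some_some hn, wheelGraph.bdeg_some_some hn]
    congr 1; field_simp; ring
  · rw [wheelGraph.bdeg_none_some hn, wheelGraph.bdeg_some_none hn]
    congr 1; field_simp; ring

theorem BRL4exp_wheelGraph (hn : 3 ≤ n) (x : ℝ) :
    BRL4exp (wheelGraph n) x =
      n + n * x ^ (((n : ℝ) + 1) ^ 3 * |(n : ℝ) - 3| / ((n : ℝ) - 2) ^ 2) := by
  have hpos := sub_two_pos_of_three_le hn
  nth_rw 1 [← mul_one (n : ℝ)]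
  refine wheelGraph.edgeSum_eq hn _ (fun i j => ?_) (fun i => ?_)
  · rw [wheelGraph.bdeg_some_some hn, wheelGraph.bdeg_some_some hn, sub_self, abs_zero,
      zero_mul, Real.rpow_zero]
  · have hdiff : (n : ℝ) + 1 - ((n : ℝ) + 1) / ((n : ℝ) - 2) =
        ((n : ℝ) + 1) * ((n : ℝ) - 3) / ((n : ℝ) - 2) := by
      field_simp; ring
    rw [wheelGraph.bdeg_none_some hn, wheelGraph.bdeg_some_none hn, hdiff, abs_div, abs_mul,
      abs_of_pos hpos, abs_of_pos (by positivity : (0 : ℝ) < n + 1)]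
    congr 1; field_simp

end BRLexp

theorem BRLexp_wheelGraph_general (n : ℕ) (hn : 3 ≤ n) (x : ℝ) :
    BRL1exp (wheelGraph n) x =
        n * x ^ (48 / ((n : ℝ) - 2) ^ 2) +
          n * x ^ (((n : ℝ) + 1) ^ 2 * ((n : ℝ) ^ 2 - 3 * n + 3) / ((n : ℝ) - 2) ^ 2) ∧
      BRL2exp (wheelGraph n) x =
        n * x ^ (16 / ((n : ℝ) - 2) ^ 2) +
          n * x ^ (((n : ℝ) + 1) ^ 2 * ((n : ℝ) ^ 2 - 5 * n + 7) / ((n : ℝ) - 2) ^ 2) ∧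
      BRL4exp (wheelGraph n) x =
        n + n * x ^ (((n : ℝ) + 1) ^ 3 * |(n : ℝ) - 3| / ((n : ℝ) - 2) ^ 2) :=
  ⟨BRL1exp_wheelGraph hn x, BRL2exp_wheelGraph hn x, BRL4exp_wheelGraph hn x⟩

/-- For the wheel graph `Wₙ` (`n ≥ 3`) and a real `x > 0`:
`BRL₁(Wₙ,x) = n·x^(48/(n−2)²) + n·x^((n+1)²(n²−3n+3)/(n−2)²)`,
`BRL₂(Wₙ,x) = n·x^(16/(n−2)²) + n·x^((n+1)²(n²−5n+7)/(n−2)²)`, and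
`BRL₄(Wₙ,x) = n + n·x^((n+1)³|n−3|/(n−2)²)`. -/
theorem BRLexp_wheelGraph (n : ℕ) (hn : 3 ≤ n) (x : ℝ) (hx : 0 < x) :
    BRL1exp (wheelGraph n) x =
        n * x ^ (48 / ((n : ℝ) - 2) ^ 2) +
          n * x ^ (((n : ℝ) + 1) ^ 2 * ((n : ℝ) ^ 2 - 3 * n + 3) / ((n : ℝ) - 2) ^ 2) ∧
      BRL2exp (wheelGraph n) x =
        n * x ^ (16 / ((n : ℝ) - 2) ^ 2) +
          n * x ^ (((n : ℝ) + 1) ^ 2 * ((n : ℝ) ^ 2 - 5 * n + 7) / ((n : ℝ) - 2) ^ 2) ∧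
      BRL4exp (wheelGraph n) x =
        n + n * x ^ (((n : ℝ) + 1) ^ 3 * |(n : ℝ) - 3| / ((n : ℝ) - 2) ^ 2) :=
  BRLexp_wheelGraph_general n hn x
end

section
/- Let K_{m,n} be the complete bipartite graph with parts of sizes m and n, where 1 ≤ m ≤ n and n ≥ 2. Then RRL1(K_{m,n}) = mn(m^2 + n^2 + mn), RRL2(K_{m,n}) = mn(m^2 + n^2 − mn), RRL3(K_{m,n}) = mn(n − m + mn), and RRL4(K_{m,n}) = m^2 n^2 (n − m). -/
open Finset SimpleGraph

variable {V : Type*}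

/-- The Revan degree of a vertex: `r_G(u) = Δ(G) + δ(G) − d_G(u)`, as a real number. -/
noncomputable def rdeg [Fintype V] (G : SimpleGraph V) (v : V) : ℝ :=
  haveI := Classical.decEq V
  haveI : DecidableRel G.Adj := Classical.decRel _
  (G.maxDegree : ℝ) + (G.minDegree : ℝ) - (G.degree v : ℝ)

/-- The first Revan Rehan–Lanel index:
`RRL₁(G) = Σ_{uv∈E(G)} (r(u)² + r(v)² + r(u)r(v))`. -/
noncomputable def RRL1 [Fintype V] (G : SimpleGraph V) : ℝ :=
  edgeSum G (fun u v => rdeg G u ^ 2 + rdeg G v ^ 2 + rdeg G u * rdeg G v)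
    (fun u v => by ring)

/-- The second Revan Rehan–Lanel index:
`RRL₂(G) = Σ_{uv∈E(G)} (r(u)² + r(v)² − r(u)r(v))`. -/
noncomputable def RRL2 [Fintype V] (G : SimpleGraph V) : ℝ :=
  edgeSum G (fun u v => rdeg G u ^ 2 + rdeg G v ^ 2 - rdeg G u * rdeg G v)
    (fun u v => by ring)

/-- The third Revan Rehan–Lanel index:
`RRL₃(G) = Σ_{uv∈E(G)} (|r(u) − r(v)| + r(u)r(v))`. -/
noncomputable def RRL3 [Fintype V] (G : SimpleGraph V) : ℝ :=
  edgeSum G (fun u v => |rdeg G u - rdeg G v| + rdeg G u * rdeg G v)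
    (fun u v => by rw [abs_sub_comm]; ring)

/-- The fourth Revan Rehan–Lanel index:
`RRL₄(G) = Σ_{uv∈E(G)} |r(u) − r(v)|·r(u)r(v)`. -/
noncomputable def RRL4 [Fintype V] (G : SimpleGraph V) : ℝ :=
  edgeSum G (fun u v => |rdeg G u - rdeg G v| * (rdeg G u * rdeg G v))
    (fun u v => by rw [abs_sub_comm]; ring)

/-! In `K_{V,W}` with both sides nonempty the degrees are `|W|` on `V` and `|V|` on `W`, so
`Δ + δ = |V| + |W|` and the Revan degree swaps the two values: it is `|V|` on `V` and `|W|` on `W`.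
The edges are in bijection with `V × W`, so an edge sum of any symmetric function `g` of the Revan
degrees is `|V| |W| g(|V|, |W|)`. -/

namespace SimpleGraph

variable {V W : Type*} [Fintype V] [Fintype W]

theorem neighborFinset_completeBipartiteGraph_inl [DecidableRel (completeBipartiteGraph V W).Adj]
    (a : V) : (completeBipartiteGraph V W).neighborFinset (.inl a) = univ.map .inr := by
  ext (b | b) <;> simp

theorem neighborFinset_completeBipartiteGraph_inr [DecidableRel (completeBipartiteGraph V W).Adj]
    (b : W) : (completeBipartiteGraph V W).neighborFinset (.inr b) = univ.map .inl := by
  ext (a | a) <;> simp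

theorem degree_completeBipartiteGraph_inl [DecidableRel (completeBipartiteGraph V W).Adj]
    (a : V) : (completeBipartiteGraph V W).degree (.inl a) = Fintype.card W := by
  rw [← card_neighborFinset_eq_degree, neighborFinset_completeBipartiteGraph_inl, card_map,
    card_univ]

theorem degree_completeBipartiteGraph_inr [DecidableRel (completeBipartiteGraph V W).Adj]
    (b : W) : (completeBipartiteGraph V W).degree (.inr b) = Fintype.card V := by
  rw [← card_neighborFinset_eq_degree, neighborFinset_completeBipartiteGraph_inr, card_map,
    card_univ]

theorem maxDegree_completeBipartiteGraph [Nonempty V] [Nonempty W]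
    [DecidableRel (completeBipartiteGraph V W).Adj] :
    (completeBipartiteGraph V W).maxDegree = max (Fintype.card V) (Fintype.card W) := by
  refine le_antisymm (maxDegree_le_of_forall_degree_le _ _ ?_) (max_le ?_ ?_)
  · rintro (a | b)
    · simp [degree_completeBipartiteGraph_inl]
    · simp [degree_completeBipartiteGraph_inr]
  · exact degree_completeBipartiteGraph_inr (V := V) (Classical.arbitrary W) ▸
      degree_le_maxDegree _ _
  · exact degree_completeBipartiteGraph_inl (W := W) (Classical.arbitrary V) ▸
      degree_le_maxDegree _ _

theorem minDegree_completeBipartiteGraph [Nonempty V] [Nonempty W]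
    [DecidableRel (completeBipartiteGraph V W).Adj] :
    (completeBipartiteGraph V W).minDegree = min (Fintype.card V) (Fintype.card W) := by
  refine le_antisymm (le_min ?_ ?_) (le_minDegree_of_forall_le_degree _ _ ?_)
  · exact degree_completeBipartiteGraph_inr (V := V) (Classical.arbitrary W) ▸
      minDegree_le_degree _ _
  · exact degree_completeBipartiteGraph_inl (W := W) (Classical.arbitrary V) ▸
      minDegree_le_degree _ _
  · rintro (a | b)
    · simp [degree_completeBipartiteGraph_inl]
    · simp [degree_completeBipartiteGraph_inr]

theorem edgeFinset_completeBipartiteGraph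
    [Fintype (completeBipartiteGraph V W).edgeSet] :
    (completeBipartiteGraph V W).edgeFinset =
      univ.map ⟨fun p : V × W ↦ s(.inl p.1, .inr p.2), by
        rintro ⟨a, b⟩ ⟨a', b'⟩ h; simpa using h⟩ := by
  rw [← coe_inj, coe_edgeFinset, coe_map, coe_univ, Set.image_univ,
    edgeSet_completeBipartiteGraph]
  rfl

end SimpleGraph

section CompleteBipartite

variable {V W : Type*} [Fintype V] [Fintype W]

theorem edgeSum_completeBipartiteGraph (f : V ⊕ W → V ⊕ W → ℝ) (hf : ∀ u v, f u v = f v u) :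
    edgeSum (completeBipartiteGraph V W) f hf = ∑ a, ∑ b, f (.inl a) (.inr b) := by
  classical
  rw [edgeSum, edgeFinset_completeBipartiteGraph, sum_map, ← univ_product_univ, sum_product]
  rfl

theorem rdeg_completeBipartiteGraph_inl [Nonempty W] (a : V) :
    rdeg (completeBipartiteGraph V W) (.inl a) = Fintype.card V := by
  have : Nonempty V := ⟨a⟩
  classical
  rw [rdeg, maxDegree_completeBipartiteGraph, minDegree_completeBipartiteGraph,
    degree_completeBipartiteGraph_inl, ← Nat.cast_add, max_add_min]
  push_cast
  ring

theorem rdeg_completeBipartiteGraph_inr [Nonempty V] (b : W) :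
    rdeg (completeBipartiteGraph V W) (.inr b) = Fintype.card W := by
  have : Nonempty W := ⟨b⟩
  classical
  rw [rdeg, maxDegree_completeBipartiteGraph, minDegree_completeBipartiteGraph,
    degree_completeBipartiteGraph_inr, ← Nat.cast_add, max_add_min]
  push_cast
  ring

theorem edgeSum_rdeg_completeBipartiteGraph (g : ℝ → ℝ → ℝ) (hg : ∀ x y, g x y = g y x) :
    edgeSum (completeBipartiteGraph V W)
        (fun u v ↦ g (rdeg (completeBipartiteGraph V W) u) (rdeg (completeBipartiteGraph V W) v))
        (fun _ _ ↦ hg _ _) =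
      Fintype.card V * Fintype.card W * g (Fintype.card V) (Fintype.card W) := by
  have h_const (a : V) (b : W) :
      g (rdeg (completeBipartiteGraph V W) (.inl a)) (rdeg (completeBipartiteGraph V W) (.inr b)) =
        g (Fintype.card V) (Fintype.card W) := by
    have : Nonempty V := ⟨a⟩
    have : Nonempty W := ⟨b⟩
    rw [rdeg_completeBipartiteGraph_inl, rdeg_completeBipartiteGraph_inr]
  simp only [edgeSum_completeBipartiteGraph, h_const, sum_const, card_univ, nsmul_eq_mul]
  ring

end CompleteBipartite

theorem RRL_completeBipartiteGraph_general (m n : ℕ) (hmn : m ≤ n) :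
    RRL1 (completeBipartiteGraph (Fin m) (Fin n)) =
        m * n * ((m : ℝ) ^ 2 + (n : ℝ) ^ 2 + m * n) ∧
      RRL2 (completeBipartiteGraph (Fin m) (Fin n)) =
        m * n * ((m : ℝ) ^ 2 + (n : ℝ) ^ 2 - m * n) ∧
      RRL3 (completeBipartiteGraph (Fin m) (Fin n)) =
        m * n * ((n : ℝ) - m + m * n) ∧
      RRL4 (completeBipartiteGraph (Fin m) (Fin n)) =
        (m : ℝ) ^ 2 * (n : ℝ) ^ 2 * ((n : ℝ) - m) := by
  have habs : |(m : ℝ) - n| = n - m := by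
    rw [abs_sub_comm, abs_of_nonneg (sub_nonneg.mpr (Nat.cast_le.mpr hmn))]
  refine ⟨?_, ?_, ?_, ?_⟩
  · exact (edgeSum_rdeg_completeBipartiteGraph (fun x y ↦ x ^ 2 + y ^ 2 + x * y)
      fun _ _ ↦ by ring).trans (by simp)
  · exact (edgeSum_rdeg_completeBipartiteGraph (fun x y ↦ x ^ 2 + y ^ 2 - x * y)
      fun _ _ ↦ by ring).trans (by simp)
  · exact (edgeSum_rdeg_completeBipartiteGraph (fun x y ↦ |x - y| + x * y)
      fun x _ ↦ by rw [abs_sub_comm, mul_comm x]).trans (by simp [habs])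
  · exact (edgeSum_rdeg_completeBipartiteGraph (fun x y ↦ |x - y| * (x * y))
      fun x _ ↦ by rw [abs_sub_comm, mul_comm x]).trans (by simp [habs]; ring)

/-- For the complete bipartite graph `K_{m,n}` with `1 ≤ m ≤ n`, `n ≥ 2`:
`RRL₁ = mn(m² + n² + mn)`, `RRL₂ = mn(m² + n² − mn)`,
`RRL₃ = mn(n − m + mn)`, `RRL₄ = m²n²(n − m)`. -/
theorem RRL_completeBipartiteGraph (m n : ℕ) (hm : 1 ≤ m) (hmn : m ≤ n) (hn : 2 ≤ n) :
    RRL1 (completeBipartiteGraph (Fin m) (Fin n)) =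
        m * n * ((m : ℝ) ^ 2 + (n : ℝ) ^ 2 + m * n) ∧
      RRL2 (completeBipartiteGraph (Fin m) (Fin n)) =
        m * n * ((m : ℝ) ^ 2 + (n : ℝ) ^ 2 - m * n) ∧
      RRL3 (completeBipartiteGraph (Fin m) (Fin n)) =
        m * n * ((n : ℝ) - m + m * n) ∧
      RRL4 (completeBipartiteGraph (Fin m) (Fin n)) =
        (m : ℝ) ^ 2 * (n : ℝ) ^ 2 * ((n : ℝ) - m) :=
  RRL_completeBipartiteGraph_general m n hmn
end

section
/- Let W_n (n ≥ 3) be the wheel graph, which has n + 1 vertices and 2n edges. Then RLKV1(W_n) = n(324n^2 + 3^n(3^n + 9n)), RLKV2(W_n) = n(162n^2 + 3^n(3^n − 9n)), RLKV3(W_n) = n(81n^2 + (9n + 1)·3^n − 9n), and RLKV4(W_n) = n·|3^n − 9n|·3^n·9n. -/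
/-!
Counting every edge once from each endpoint, twice an edge sum is `∑ u, ∑ w ~ u, f u w`.
In `Wₙ` the hub sees `n` rim vertices with `M = 9n`, and every rim vertex sees the hub
(`M = 3ⁿ`) and its two cycle neighbours (`M = 9n`). Hence each index equals
`n · F(3ⁿ, 9n) + n · F(9n, 9n)` for its symmetric summand `F`, and `RLKV₃` only needs in
addition that `9n ≤ 3ⁿ` for `n ≥ 3`.
-/

open Finset SimpleGraph

variable {V : Type*}

/-- `M_G(u)`: the product of the degrees of all vertices adjacent to `u`, as a real number. -/
noncomputable def mdeg [Fintype V] (G : SimpleGraph V) (u : V) : ℝ :=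
  haveI := Classical.decEq V
  haveI : DecidableRel G.Adj := Classical.decRel _
  ∏ w ∈ G.neighborFinset u, (G.degree w : ℝ)

/-- The first Rehan–Lanel KV index:
`RLKV₁(G) = Σ_{uv∈E(G)} (M(u)² + M(v)² + M(u)M(v))`. -/
noncomputable def RLKV1 [Fintype V] (G : SimpleGraph V) : ℝ :=
  edgeSum G (fun u v => mdeg G u ^ 2 + mdeg G v ^ 2 + mdeg G u * mdeg G v)
    (fun u v => by ring)

/-- The second Rehan–Lanel KV index:
`RLKV₂(G) = Σ_{uv∈E(G)} (M(u)² + M(v)² − M(u)M(v))`. -/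
noncomputable def RLKV2 [Fintype V] (G : SimpleGraph V) : ℝ :=
  edgeSum G (fun u v => mdeg G u ^ 2 + mdeg G v ^ 2 - mdeg G u * mdeg G v)
    (fun u v => by ring)

/-- The third Rehan–Lanel KV index:
`RLKV₃(G) = Σ_{uv∈E(G)} (|M(u) − M(v)| + M(u)M(v))`. -/
noncomputable def RLKV3 [Fintype V] (G : SimpleGraph V) : ℝ :=
  edgeSum G (fun u v => |mdeg G u - mdeg G v| + mdeg G u * mdeg G v)
    (fun u v => by (try dsimp only); rw [abs_sub_comm]; ring)

/-- The fourth Rehan–Lanel KV index: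
`RLKV₄(G) = Σ_{uv∈E(G)} |M(u) − M(v)|·M(u)M(v)`. -/
noncomputable def RLKV4 [Fintype V] (G : SimpleGraph V) : ℝ :=
  edgeSum G (fun u v => |mdeg G u - mdeg G v| * (mdeg G u * mdeg G v))
    (fun u v => by (try dsimp only); rw [abs_sub_comm]; ring)

namespace SimpleGraph

variable {M : Type*} [AddCommMonoid M] (G : SimpleGraph V) [Fintype V] [DecidableRel G.Adj]

theorem sum_dart_edge_eq_two_nsmul [DecidableEq V] (g : Sym2 V → M) :
    ∑ d : G.Dart, g d.edge = 2 • ∑ e ∈ G.edgeFinset, g e := by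
  rw [← Finset.sum_fiberwise_of_maps_to (t := G.edgeFinset) (g := Dart.edge)
    (fun d _ => G.mem_edgeFinset.2 d.edge_mem), Finset.smul_sum]
  refine Finset.sum_congr rfl fun e he => ?_
  rw [Finset.sum_congr rfl fun d hd => congrArg g (Finset.mem_filter.1 hd).2, Finset.sum_const,
    G.dart_edge_fiber_card e (G.mem_edgeFinset.1 he)]

theorem sum_dart_eq_sum_neighborFinset (f : V → V → M) :
    ∑ d : G.Dart, f d.fst d.snd = ∑ u, ∑ w ∈ G.neighborFinset u, f u w := by
  let e : (Σ u, G.neighborSet u) ≃ G.Dart :=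
    { toFun := fun s => ⟨(s.fst, s.snd), s.snd.property⟩
      invFun := fun d => ⟨d.fst, d.snd, d.adj⟩ }
  rw [← e.sum_comp, Fintype.sum_sigma]
  exact Fintype.sum_congr _ _ fun u =>
    (Finset.sum_subtype _ (fun w => G.mem_neighborFinset u w) (f u)).symm

theorem cycleGraph_degree {n : ℕ} (hn : 3 ≤ n) (i : Fin n) : (cycleGraph n).degree i = 2 := by
  obtain ⟨m, rfl⟩ := Nat.exists_eq_add_of_le' hn
  exact cycleGraph_degree_three_le

end SimpleGraph

theorem edgeSum_eq_sum_neighborFinset_div_two [Fintype V] (G : SimpleGraph V)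
    [DecidableRel G.Adj] (f : V → V → ℝ) (hf : ∀ u v, f u v = f v u) :
    edgeSum G f hf = (∑ u, ∑ w ∈ G.neighborFinset u, f u w) / 2 := by
  classical
  calc edgeSum G f hf = (2 • ∑ e ∈ G.edgeFinset, Sym2.lift ⟨f, hf⟩ e) / 2 := by
        rw [two_nsmul, ← two_mul, mul_div_cancel_left₀ _ two_ne_zero, edgeSum]
        congr!
    _ = _ := by
        rw [← sum_dart_edge_eq_two_nsmul, ← sum_dart_eq_sum_neighborFinset]
        rfl

-- `mdeg` is defined with classical decidability instances; this frees it from them.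
theorem mdeg_eq_prod_degree [Fintype V] (G : SimpleGraph V) [DecidableRel G.Adj] (u : V) :
    mdeg G u = ∏ w ∈ G.neighborFinset u, (G.degree w : ℝ) := by
  unfold mdeg
  congr!

section wheelGraph

variable {n : ℕ}

theorem wheelGraph_adj_none_some (i : Fin n) : (wheelGraph n).Adj none (some i) := by
  simp [wheelGraph]

theorem wheelGraph_adj_some_some {i j : Fin n} :
    (wheelGraph n).Adj (some i) (some j) ↔ (cycleGraph n).Adj i j := by
  simp only [wheelGraph, fromRel_adj, ne_eq, reduceCtorEq, Option.some.injEq, exists_and_left,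
    exists_eq_left', false_or]
  exact ⟨fun ⟨_, h⟩ => h.elim id .symm, fun h => ⟨h.ne, .inl h⟩⟩

theorem wheelGraph_neighborFinset_none [DecidableRel (wheelGraph n).Adj] :
    (wheelGraph n).neighborFinset none = univ.image some := by
  ext (_ | i) <;> simp [wheelGraph_adj_none_some]

theorem wheelGraph_neighborFinset_some [DecidableRel (wheelGraph n).Adj] (i : Fin n) :
    (wheelGraph n).neighborFinset (some i) =
      insert none (((cycleGraph n).neighborFinset i).image some) := by
  ext (_ | j)
  · simp [(wheelGraph_adj_none_some i).symm]
  · simp [wheelGraph_adj_some_some]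

theorem wheelGraph_degree_none [DecidableRel (wheelGraph n).Adj] :
    (wheelGraph n).degree none = n := by
  rw [← card_neighborFinset_eq_degree, wheelGraph_neighborFinset_none,
    card_image_of_injective _ (Option.some_injective _), card_univ, Fintype.card_fin]

theorem wheelGraph_degree_some (hn : 3 ≤ n) [DecidableRel (wheelGraph n).Adj] (i : Fin n) :
    (wheelGraph n).degree (some i) = 3 := by
  rw [← card_neighborFinset_eq_degree, wheelGraph_neighborFinset_some,
    card_insert_of_notMem (by simp), card_image_of_injective _ (Option.some_injective _),
    card_neighborFinset_eq_degree, cycleGraph_degree hn]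

theorem mdeg_wheelGraph_none (hn : 3 ≤ n) : mdeg (wheelGraph n) none = 3 ^ n := by
  classical
  rw [mdeg_eq_prod_degree, wheelGraph_neighborFinset_none,
    prod_image (Option.some_injective _).injOn]
  simp [wheelGraph_degree_some hn]

theorem mdeg_wheelGraph_some (hn : 3 ≤ n) (i : Fin n) : mdeg (wheelGraph n) (some i) = 9 * n := by
  classical
  rw [mdeg_eq_prod_degree, wheelGraph_neighborFinset_some, prod_insert (by simp),
    prod_image (Option.some_injective _).injOn]
  simp only [wheelGraph_degree_none, wheelGraph_degree_some hn, Nat.cast_ofNat, prod_const,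
    card_neighborFinset_eq_degree, cycleGraph_degree hn]
  ring

theorem edgeSum_wheelGraph (hn : 3 ≤ n) (F : ℝ → ℝ → ℝ) (hF : ∀ a b, F a b = F b a) :
    edgeSum (wheelGraph n) (fun u v => F (mdeg (wheelGraph n) u) (mdeg (wheelGraph n) v))
        (fun _ _ => hF _ _) =
      n * F (3 ^ n) (9 * n) + n * F (9 * n) (9 * n) := by
  classical
  set m := mdeg (wheelGraph n)
  have hhub :
      ∑ w ∈ (wheelGraph n).neighborFinset none, F (m none) (m w) = n * F (3 ^ n) (9 * n) := by
    rw [wheelGraph_neighborFinset_none, sum_image (Option.some_injective _).injOn]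
    simp [m, mdeg_wheelGraph_none hn, mdeg_wheelGraph_some hn]
  have hrim (i : Fin n) : ∑ w ∈ (wheelGraph n).neighborFinset (some i), F (m (some i)) (m w) =
      F (3 ^ n) (9 * n) + 2 * F (9 * n) (9 * n) := by
    rw [wheelGraph_neighborFinset_some, sum_insert (by simp),
      sum_image (Option.some_injective _).injOn]
    simp [m, mdeg_wheelGraph_none hn, mdeg_wheelGraph_some hn, cycleGraph_degree hn, hF (9 * n)]
  rw [edgeSum_eq_sum_neighborFinset_div_two, Fintype.sum_option, hhub, Fintype.sum_congr _ _ hrim]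
  simp only [sum_const, card_univ, Fintype.card_fin, nsmul_eq_mul]
  ring

end wheelGraph

theorem Nat.nine_mul_le_three_pow {n : ℕ} (hn : 3 ≤ n) : 9 * n ≤ 3 ^ n := by
  induction n, hn using Nat.le_induction with
  | base => norm_num
  | succ m _ ih => rw [pow_succ]; omega

/-- For the wheel graph `Wₙ` (`n ≥ 3`), which has `n+1` vertices and `2n` edges:
`RLKV₁ = n(324n² + 3ⁿ(3ⁿ + 9n))`, `RLKV₂ = n(162n² + 3ⁿ(3ⁿ − 9n))`,
`RLKV₃ = n(81n² + (9n + 1)·3ⁿ − 9n)`, `RLKV₄ = n·|3ⁿ − 9n|·3ⁿ·9n`. -/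
theorem RLKV_wheelGraph (n : ℕ) (hn : 3 ≤ n) :
    RLKV1 (wheelGraph n) = n * (324 * (n : ℝ) ^ 2 + 3 ^ n * ((3 : ℝ) ^ n + 9 * n)) ∧
      RLKV2 (wheelGraph n) = n * (162 * (n : ℝ) ^ 2 + 3 ^ n * ((3 : ℝ) ^ n - 9 * n)) ∧
      RLKV3 (wheelGraph n) = n * (81 * (n : ℝ) ^ 2 + (9 * (n : ℝ) + 1) * 3 ^ n - 9 * n) ∧
      RLKV4 (wheelGraph n) = n * |(3 : ℝ) ^ n - 9 * n| * 3 ^ n * (9 * n) := by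
  have hle : (9 * n : ℝ) ≤ 3 ^ n := by exact_mod_cast Nat.nine_mul_le_three_pow hn
  refine ⟨?_, ?_, ?_, ?_⟩
  · rw [RLKV1, edgeSum_wheelGraph hn (fun a b => a ^ 2 + b ^ 2 + a * b) fun a b => by ring]
    ring
  · rw [RLKV2, edgeSum_wheelGraph hn (fun a b => a ^ 2 + b ^ 2 - a * b) fun a b => by ring]
    ring
  · rw [RLKV3, edgeSum_wheelGraph hn (fun a b => |a - b| + a * b) fun a b => by
      rw [abs_sub_comm, mul_comm]]
    simp only [sub_self, abs_zero, abs_of_nonneg (sub_nonneg.2 hle)]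
    ring
  · rw [RLKV4, edgeSum_wheelGraph hn (fun a b => |a - b| * (a * b)) fun a b => by
      rw [abs_sub_comm, mul_comm a]]
    simp only [sub_self, abs_zero, zero_mul]
    ring
end
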